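/- arXiv:2002.00081 — 6 statements merged into one kernel-verified Lean document; each statement's English description precedes it below -/
import Mathlib

section
/- For a permutation w in S_n, the following are equivalent: (1) the Rothe diagram D(w) = {(i,j) : j < w(i) and i < w^{-1}(j)} is the Young diagram of a partition (i.e., left-justified rows of weakly decreasing length); (2) the code of w, where c_i(w) = #{j : (i,j) ∈ D(w)}, is weakly decreasing; (3) w is 132-avoiding, i.e., there exist no i < j < k with w(i) < w(k) < w(j). -/
open Finset

/-- The Rothe diagram of a permutation `w` of `{0,...,n-1}`:
pairs `(i,j)` with `j < w(i)` and `i < w⁻¹(j)`. -/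
def rothe (n : ℕ) (w : Equiv.Perm (Fin n)) : Finset (Fin n × Fin n) :=
  Finset.univ.filter fun p => p.2 < w p.1 ∧ p.1 < w⁻¹ p.2

/-- The code of a permutation: `c_i(w) = #{j : (i,j) ∈ D(w)}`. -/
def code {n : ℕ} (w : Equiv.Perm (Fin n)) (i : Fin n) : ℕ :=
  (Finset.univ.filter fun j : Fin n => (i, j) ∈ rothe n w).card

lemma mem_rothe {n : ℕ} {w : Equiv.Perm (Fin n)} {i j : Fin n} :
    (i, j) ∈ rothe n w ↔ j < w i ∧ i < w⁻¹ j := by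
  simp [rothe]

lemma code_eq {n : ℕ} (w : Equiv.Perm (Fin n)) (i : Fin n) :
    code w i = (univ.filter fun k : Fin n => i < k ∧ w k < w i).card := by
  rw [code, ← Finset.card_map (f := (w⁻¹ : Equiv.Perm (Fin n)).toEmbedding)]
  congr 1
  ext k
  simp only [Finset.mem_map, Finset.mem_filter, Finset.mem_univ, true_and,
    Equiv.coe_toEmbedding, mem_rothe]
  constructor
  · rintro ⟨j, ⟨hj1, hj2⟩, rfl⟩
    exact ⟨hj2, by simpa using hj1⟩
  · rintro ⟨h1, h2⟩
    exact ⟨w k, ⟨h2, by simpa using h1⟩, by simp⟩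

lemma avoid_antitone {n : ℕ} {w : Equiv.Perm (Fin n)}
    (h3 : ¬ ∃ i j k : Fin n, i < j ∧ j < k ∧ w i < w k ∧ w k < w j) :
    ∀ i i' : Fin n, i ≤ i' → code w i' ≤ code w i := by
  intro i i' hii
  rw [code_eq, code_eq]
  apply Finset.card_le_card
  intro k hk
  simp only [Finset.mem_filter, Finset.mem_univ, true_and] at hk ⊢
  obtain ⟨hk1, hk2⟩ := hk
  have hik : i < k := lt_of_le_of_lt hii hk1
  refine ⟨hik, ?_⟩
  rcases eq_or_lt_of_le hii with rfl | hlt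
  · exact hk2
  · by_contra hge
    push_neg at hge
    have hne : w i ≠ w k := fun h => (ne_of_lt hik) (w.injective h)
    have : w i < w k := lt_of_le_of_ne hge hne
    exact h3 ⟨i, i', k, hlt, hk1, this, hk2⟩

/-- Theorem: for `w ∈ S_n`, the following are equivalent:
(1) the Rothe diagram is the Young diagram of a partition, i.e. each row is
left-justified and the row lengths weakly decrease;
(2) the code of `w` is weakly decreasing;
(3) `w` is 132-avoiding. -/
theorem dominant_tfae (n : ℕ) (w : Equiv.Perm (Fin n)) :
    List.TFAE
      [ (∀ i j j' : Fin n, (i, j) ∈ rothe n w → j' ≤ j → (i, j') ∈ rothe n w) ∧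
          (∀ i i' : Fin n, i ≤ i' → code w i' ≤ code w i),
        ∀ i i' : Fin n, i ≤ i' → code w i' ≤ code w i,
        ¬ ∃ i j k : Fin n, i < j ∧ j < k ∧ w i < w k ∧ w k < w j ] := by
  tfae_have 1 → 2 := fun h => h.2
  tfae_have 2 → 3 := by
    intro h2
    rintro ⟨i, j, k, hij, hjk, h1, h2'⟩
    -- S = elements m < j with w m < w k; take its max a
    have hSne : (univ.filter fun m : Fin n => m < j ∧ w m < w k).Nonempty :=
      ⟨i, by simp [hij, h1]⟩
    set S := univ.filter fun m : Fin n => m < j ∧ w m < w k with hS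
    obtain ⟨haj, hak⟩ : S.max' hSne < j ∧ w (S.max' hSne) < w k := by
      have := S.max'_mem hSne
      simpa [hS] using this
    set a := S.max' hSne with ha
    have hb : a.val + 1 < n := lt_of_le_of_lt haj j.isLt
    set b : Fin n := ⟨a.val + 1, hb⟩ with hbdef
    have hab : a < b := by simp [hbdef, Fin.lt_def]
    have hbj : b ≤ j := by
      have := haj
      simp only [Fin.lt_def] at this
      simp [hbdef, Fin.le_def]; omega
    have hbk : b < k := lt_of_le_of_lt hbj hjk
    -- w k < w b
    have hkb : w k < w b := by
      rcases eq_or_lt_of_le hbj with heq | hbj'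
      · rw [heq]; exact h2'
      · have hbnotS : b ∉ S := fun hmem => absurd (S.le_max' b hmem) (not_le.mpr hab)
        have : ¬ (w b < w k) := fun hwb => hbnotS (by simp [hS, hbj', hwb])
        have hne : w k ≠ w b := fun h => (ne_of_lt hbk) (w.injective h.symm)
        exact lt_of_le_of_ne (not_lt.mp this) hne
    -- code w a < code w b
    have key : code w a < code w b := by
      rw [code_eq, code_eq]
      apply Finset.card_lt_card
      constructor
      · intro m hm
        simp only [Finset.mem_filter, Finset.mem_univ, true_and] at hm ⊢
        obtain ⟨hm1, hm2⟩ := hm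
        have hmb : w m < w b := lt_trans (lt_trans hm2 hak) hkb
        have hmneb : m ≠ b := fun h => (ne_of_lt hmb) (congrArg w h)
        constructor
        · simp only [Fin.lt_def] at hm1 ⊢
          have : m.val ≠ a.val + 1 := fun h => hmneb (Fin.ext (by simp [hbdef, h]))
          simp [hbdef]; omega
        · exact hmb
      · intro hsub
        have hkmem : k ∈ univ.filter fun m : Fin n => b < m ∧ w m < w b := by
          simp [hbk, hkb]
        have := hsub hkmem
        simp only [Finset.mem_filter, Finset.mem_univ, true_and] at this
        exact absurd this.2 (not_lt.mpr (le_of_lt hak))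
    exact absurd (h2 a b (le_of_lt hab)) (not_le.mpr key)
  tfae_have 3 → 1 := by
    intro h3
    refine ⟨?_, avoid_antitone h3⟩
    intro i j j' hmem hle
    rw [mem_rothe] at hmem ⊢
    obtain ⟨h1, h2⟩ := hmem
    have hj' : j' < w i := lt_of_le_of_lt hle h1
    refine ⟨hj', ?_⟩
    by_contra hge
    push_neg at hge
    have hne : w⁻¹ j' ≠ i := by
      intro h
      have : j' = w i := by rw [← h]; simp
      exact absurd this (ne_of_lt hj')
    have ha : w⁻¹ j' < i := lt_of_le_of_ne hge hne
    have hjj' : j' < j := by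
      rcases lt_or_eq_of_le hle with h | rfl
      · exact h
      · exact absurd h2 (not_lt.mpr hge)
    exact h3 ⟨w⁻¹ j', i, w⁻¹ j, ha, h2, by simpa using hjj', by simpa using h1⟩
  tfae_finish
end

section
/- If w ∈ S_n is a dominant permutation (i.e., 132-avoiding), then the Schubert polynomial of w equals the monomial ∏_{(i,j) ∈ D(w)} x_i = ∏_{i=1}^n x_i^{c_i(w)}, where D(w) is the Rothe diagram and c_i(w) is the code of w. -/
open Finset MvPolynomial

/-- The number of inversions (the length) of a permutation. -/
def invCount {n : ℕ} (w : Equiv.Perm (Fin n)) : ℕ :=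
  (Finset.univ.filter fun p : Fin n × Fin n => p.1 < p.2 ∧ w p.2 < w p.1).card

/-- The longest permutation `w_0`. -/
def w0 (n : ℕ) : Equiv.Perm (Fin n) := Fin.revPerm

open Classical in
/-- The divided difference operator `∂` with respect to variables `x_i`, `x_j`:
`∂(f) = (f - s·f)/(x_i - x_j)` where `s·f` swaps the variables `x_i` and `x_j`.
(It is `0` in the impossible case that the division cannot be carried out.) -/
noncomputable def ddiff {n : ℕ} (i j : Fin n) (f : MvPolynomial (Fin n) ℤ) :
    MvPolynomial (Fin n) ℤ :=
  if h : ∃ g, f - MvPolynomial.rename (Equiv.swap i j) f = (X i - X j) * g then h.choose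
  else 0

/-- `IsSchubert w f` asserts that `f` is the Schubert polynomial of `w`, via the
recursive definition: the Schubert polynomial of `w_0` is
`x_1^{n-1} x_2^{n-2} ⋯ x_{n-1}` (0-indexed: `∏ x_i^{n-1-i}`), and
`S_w = ∂_i (S_{w s_i})` whenever `ℓ(w s_i) = ℓ(w) + 1`. -/
inductive IsSchubert {n : ℕ} : Equiv.Perm (Fin n) → MvPolynomial (Fin n) ℤ → Prop
  | base : IsSchubert (w0 n) (∏ i : Fin n, X i ^ (n - 1 - i.val))
  | step (w : Equiv.Perm (Fin n)) (i : Fin n) (hi : i.val + 1 < n)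
      (f : MvPolynomial (Fin n) ℤ) :
      IsSchubert (w * Equiv.swap i ⟨i.val + 1, hi⟩) f →
      invCount (w * Equiv.swap i ⟨i.val + 1, hi⟩) = invCount w + 1 →
      IsSchubert w (ddiff i ⟨i.val + 1, hi⟩ f)

/-!
The code of a dominant permutation is weakly decreasing and bounded by the staircase
`(n - 1, …, 1, 0)`, the code of `w₀`. If it is not the staircase, it has a first plateau
`c_k = c_{k+1}`; then `w k < w (k + 1)`, and `w s_k` has the code `c + e_k`, which is still weakly
decreasing, and length one more. Since `c_k = c_{k+1}`, the monomial `x^(c + e_k)` is `x_k` times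
a polynomial symmetric in `x_k, x_{k+1}`, so `∂_k x^(c + e_k) = x^c`. Induction on the distance
to the staircase therefore reduces everything to `S_{w₀}`.
-/

open Equiv

namespace SchubertDominant

variable {n : ℕ}

theorem tsub_le_of_strictAnti {c : Fin n → ℕ} (hc : StrictAnti c) (i : Fin n) :
    n - 1 - i ≤ c i := by
  rw [← Fin.card_Ioi, ← Nat.card_Iio (c i)]
  exact card_le_card_of_injOn c (fun m hm => mem_Iio.mpr (hc (mem_Ioi.mp hm)))
    hc.injective.injOn

theorem exists_first_plateau {c : Fin n → ℕ} (hc : Antitone c) (hstrict : ¬ StrictAnti c) :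
    ∃ (k : Fin n) (hk : (k : ℕ) + 1 < n), c ⟨k + 1, hk⟩ = c k ∧ ∀ j < k, c k < c j := by
  obtain ⟨a, b, hab, hcab⟩ : ∃ a b, a < b ∧ c a = c b := by
    simp only [StrictAnti, not_forall, not_lt] at hstrict
    obtain ⟨a, b, hab, h⟩ := hstrict
    exact ⟨a, b, hab, le_antisymm h (hc hab.le)⟩
  -- the first index where `c` takes the value `c a` starts a plateau
  set s : Finset (Fin n) := {j | c j = c a}
  have ha : a ∈ s := by simp [s]
  set k := s.min' ⟨a, ha⟩
  have hck : c k = c a := (mem_filter.mp (min'_mem s _)).2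
  have hka : (k : ℕ) ≤ a := min'_le s a ha
  have hab' : (a : ℕ) < b := hab
  have hk : (k : ℕ) + 1 < n := by omega
  refine ⟨k, hk, le_antisymm ?_ ?_, fun j hj => lt_of_le_of_ne (hc hj.le) fun h => ?_⟩
  · exact hc (Fin.le_def.mpr (Nat.le_succ _))
  · rw [hck, hcab]
    exact hc (Fin.le_def.mpr (by simp only; omega))
  · exact (min'_le s j (by simp [s, ← h, hck])).not_gt hj

theorem antitone_update_succ {c : Fin n → ℕ} (hc : Antitone c) {k : Fin n}
    (hk : ∀ j < k, c k < c j) : Antitone (Function.update c k (c k + 1)) := by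
  intro a b hab
  rcases eq_or_ne a k with hak | hak <;> rcases eq_or_ne b k with hbk | hbk
  · rw [hak, hbk]
  · rw [hak, Function.update_self, Function.update_of_ne hbk]
    have := hc (hak ▸ hab)
    omega
  · rw [hbk, Function.update_self, Function.update_of_ne hak]
    exact hk a (lt_of_le_of_ne (hbk ▸ hab) hak)
  · simp only [Function.update_of_ne hak, Function.update_of_ne hbk]
    exact hc hab

theorem sum_update_succ {ι : Type*} [Fintype ι] [DecidableEq ι] (c : ι → ℕ) (k : ι) :
    ∑ i, Function.update c k (c k + 1) i = ∑ i, c i + 1 := by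
  rw [sum_update_of_mem (mem_univ k), ← add_sum_erase _ _ (mem_univ k), sdiff_singleton_eq_erase]
  ring

theorem ddiff_eq_of_sub_eq_mul {i j : Fin n} (hij : i ≠ j) {f g : MvPolynomial (Fin n) ℤ}
    (h : f - rename (swap i j) f = (X i - X j) * g) : ddiff i j f = g := by
  have hex : ∃ g, f - rename (swap i j) f = (X i - X j) * g := ⟨g, h⟩
  rw [ddiff, dif_pos hex]
  exact mul_left_cancel₀ (sub_ne_zero_of_ne (X_injective.ne hij)) (hex.choose_spec.symm.trans h)

theorem rename_swap_prod_X_pow {i j : Fin n} {c : Fin n → ℕ} (hc : c j = c i) :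
    rename (swap i j) (∏ m, X m ^ c m : MvPolynomial (Fin n) ℤ) = ∏ m, X m ^ c m := by
  simp only [map_prod, map_pow, rename_X]
  refine Fintype.prod_equiv (swap i j) _ _ fun m => ?_
  rcases eq_or_ne m i with rfl | hmi
  · simp [hc]
  rcases eq_or_ne m j with rfl | hmj
  · simp [hc]
  · simp [swap_apply_of_ne_of_ne hmi hmj]

theorem prod_X_pow_update_succ (c : Fin n → ℕ) (k : Fin n) :
    (∏ m, X m ^ Function.update c k (c k + 1) m : MvPolynomial (Fin n) ℤ) =
      X k * ∏ m, X m ^ c m := by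
  rw [← mul_prod_erase _ _ (mem_univ k), ← mul_prod_erase _ _ (mem_univ k),
    Function.update_self, pow_succ', mul_assoc]
  congr 2
  exact prod_congr rfl fun m hm => by rw [Function.update_of_ne (ne_of_mem_erase hm)]

theorem ddiff_prod_X_pow_update_succ {i j : Fin n} (hij : i ≠ j) {c : Fin n → ℕ}
    (hc : c j = c i) :
    ddiff i j (∏ m, X m ^ Function.update c i (c i + 1) m) = ∏ m, X m ^ c m := by
  refine ddiff_eq_of_sub_eq_mul hij ?_
  rw [prod_X_pow_update_succ, map_mul, rename_X, swap_apply_left, rename_swap_prod_X_pow hc]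
  ring

theorem code_eq_card (w : Perm (Fin n)) (i : Fin n) :
    code w i = #{m | i < m ∧ w m < w i} := by
  refine Finset.card_equiv w⁻¹ fun j => ?_
  simp only [rothe, mem_filter, mem_univ, true_and, Perm.inv_def, Equiv.apply_symm_apply]
  tauto

theorem code_le (w : Perm (Fin n)) (i : Fin n) : code w i ≤ n - 1 - i := by
  rw [code_eq_card, ← Fin.card_Ioi]
  exact card_le_card fun m hm => mem_Ioi.mpr (mem_filter.mp hm).2.1

theorem code_lt_code {w : Perm (Fin n)} {i j : Fin n} (hij : i < j) (hw : w j < w i) :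
    code w j < code w i := by
  rw [code_eq_card, code_eq_card, Nat.lt_iff_add_one_le,
    ← card_insert_of_notMem (a := j) (by simp)]
  refine card_le_card (insert_subset (by simp [hij, hw]) fun m hm => ?_)
  simp only [mem_filter, mem_univ, true_and] at hm ⊢
  exact ⟨hij.trans hm.1, hm.2.trans hw⟩

theorem invCount_eq_sum_code (w : Perm (Fin n)) : invCount w = ∑ i, code w i := by
  simp only [invCount, card_filter, Fintype.sum_prod_type, code_eq_card]

theorem prod_rothe (w : Perm (Fin n)) :
    ∏ p ∈ rothe n w, (X p.1 : MvPolynomial (Fin n) ℤ) = ∏ i, X i ^ code w i := by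
  rw [rothe, prod_filter, Fintype.prod_prod_type]
  refine prod_congr rfl fun i _ => ?_
  rw [code, ← prod_const, prod_filter]
  simp [rothe]

theorem antitone_code {w : Perm (Fin n)}
    (hdom : ¬ ∃ i j k : Fin n, i < j ∧ j < k ∧ w i < w k ∧ w k < w j) :
    Antitone (code w) := by
  intro i j hij
  rcases hij.eq_or_lt with rfl | hij
  · rfl
  rcases lt_or_gt_of_ne (w.injective.ne hij.ne) with hw | hw
  · rw [code_eq_card, code_eq_card]
    refine card_le_card fun m hm => ?_
    simp only [mem_filter, mem_univ, true_and] at hm ⊢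
    refine ⟨hij.trans hm.1, lt_of_not_ge fun h => hdom ⟨i, j, m, hij, hm.1, ?_, hm.2⟩⟩
    exact h.lt_of_ne (w.injective.ne (hij.trans hm.1).ne)
  · exact (code_lt_code hij hw).le

theorem strictAnti_of_code_eq {w : Perm (Fin n)} (hw : ∀ i, code w i = n - 1 - i) :
    StrictAnti w := by
  intro i m him
  have hset : #{m | i < m ∧ w m < w i} = #(Ioi i) := by rw [← code_eq_card, hw, Fin.card_Ioi]
  have := eq_of_subset_of_card_le (fun x hx => mem_Ioi.mpr (mem_filter.mp hx).2.1) hset.ge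
  have hm : m ∈ Ioi i := mem_Ioi.mpr him
  rw [← this] at hm
  exact (mem_filter.mp hm).2.2

theorem eq_w0_of_strictAnti {w : Perm (Fin n)} (hw : StrictAnti w) : w = w0 n := by
  have hmono : StrictMono (Fin.rev ∘ w) := fun a b h => Fin.rev_lt_rev.mpr (hw h)
  refine Equiv.ext fun i => ?_
  have hi : (w i).rev = i := congrFun hmono.eq_id i
  rw [w0, Fin.revPerm_apply, ← Fin.rev_eq_iff, hi]

theorem code_mul_swap_eq_card (w : Perm (Fin n)) (a b i : Fin n) :
    code (w * swap a b) i = #{m | i < swap a b m ∧ w m < w (swap a b i)} := by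
  rw [code_eq_card]
  refine Finset.card_equiv (swap a b) fun m => ?_
  rw [mem_filter, mem_filter]
  simp only [mem_univ, true_and, swap_apply_self, Perm.mul_apply]

theorem lt_swap_apply_iff_of_ne {k k' i : Fin n} (hk : (k' : ℕ) = k + 1) (hik : i ≠ k)
    (hik' : i ≠ k') (m : Fin n) : i < swap k k' m ↔ i < m := by
  simp only [swap_apply_def, Fin.lt_def, ne_eq, Fin.ext_iff] at *
  split_ifs <;> omega

theorem lt_swap_apply_left_iff {k k' : Fin n} (hk : (k' : ℕ) = k + 1) (m : Fin n) :
    k < swap k k' m ↔ m = k ∨ k' < m := by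
  simp only [swap_apply_def, Fin.lt_def, Fin.ext_iff] at *
  split_ifs <;> omega

theorem lt_swap_apply_right_iff {k k' : Fin n} (hk : (k' : ℕ) = k + 1) (m : Fin n) :
    k' < swap k k' m ↔ k' < m := by
  simp only [swap_apply_def, Fin.lt_def, Fin.ext_iff] at *
  split_ifs <;> omega

theorem code_mul_swap_of_ne {k k' i : Fin n} (hk : (k' : ℕ) = k + 1) (hik : i ≠ k)
    (hik' : i ≠ k') (w : Perm (Fin n)) : code (w * swap k k') i = code w i := by
  rw [code_mul_swap_eq_card, code_eq_card]
  simp only [lt_swap_apply_iff_of_ne hk hik hik', swap_apply_of_ne_of_ne hik hik']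

theorem code_mul_swap_left {k k' : Fin n} (hk : (k' : ℕ) = k + 1) {w : Perm (Fin n)}
    (hw : w k < w k') : code (w * swap k k') k = code w k' + 1 := by
  have hk'k : ¬ k' < k := by simp [Fin.lt_def, hk]
  rw [code_mul_swap_eq_card, code_eq_card, swap_apply_left,
    ← card_insert_of_notMem (a := k) (by simp [hk'k])]
  congr 1
  ext m
  simp only [mem_filter, mem_univ, true_and, mem_insert, lt_swap_apply_left_iff hk, or_and_right]
  constructor
  · rintro (⟨rfl, -⟩ | h) <;> simp_all
  · rintro (rfl | h) <;> simp_all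

theorem code_mul_swap_right {k k' : Fin n} (hk : (k' : ℕ) = k + 1) {w : Perm (Fin n)}
    (hw : w k < w k') : code (w * swap k k') k' = code w k := by
  rw [code_mul_swap_eq_card, code_eq_card, swap_apply_right]
  congr 1
  ext m
  simp only [mem_filter, mem_univ, true_and, lt_swap_apply_right_iff hk]
  constructor
  · exact fun h => ⟨lt_trans (by simp [Fin.lt_def, hk]) h.1, h.2⟩
  · refine fun h => ⟨?_, h.2⟩
    have hm : m ≠ k' := by rintro rfl; exact lt_asymm h.2 hw
    simp only [Fin.lt_def, ne_eq, Fin.ext_iff] at h hm ⊢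
    omega

theorem code_mul_swap_eq_update {k k' : Fin n} (hk : (k' : ℕ) = k + 1) {w : Perm (Fin n)}
    (hw : w k < w k') (hc : code w k' = code w k) :
    code (w * swap k k') = Function.update (code w) k (code w k + 1) := by
  funext i
  rcases eq_or_ne i k with rfl | hik
  · rw [Function.update_self, code_mul_swap_left hk hw, hc]
  rw [Function.update_of_ne hik]
  rcases eq_or_ne i k' with rfl | hik'
  · rw [code_mul_swap_right hk hw, hc]
  · exact code_mul_swap_of_ne hk hik hik' w

theorem isSchubert_prod_X_pow_code (w : Perm (Fin n)) (hanti : Antitone (code w)) :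
    IsSchubert w (∏ i, X i ^ code w i) := by
  generalize hd : ∑ i : Fin n, (n - 1 - i) - ∑ i, code w i = d
  induction d generalizing w with
  | zero =>
    have hle := sum_le_sum fun i (_ : i ∈ univ) => code_le w i
    have hcode : ∀ i, code w i = n - 1 - i := fun i =>
      (sum_eq_sum_iff_of_le fun i _ => code_le w i).mp (by omega) i (mem_univ i)
    rw [prod_congr rfl fun i _ => by rw [hcode i],
      eq_w0_of_strictAnti (strictAnti_of_code_eq hcode)]
    exact IsSchubert.base
  | succ d ih =>
    have hnot : ¬ StrictAnti (code w) := fun h => by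
      have := sum_le_sum fun i (_ : i ∈ univ) => tsub_le_of_strictAnti h i
      omega
    obtain ⟨k, hk, hplateau, hfirst⟩ := exists_first_plateau hanti hnot
    set k' : Fin n := ⟨k + 1, hk⟩
    have hkk' : k < k' := Fin.lt_def.mpr (Nat.lt_succ_self _)
    have hw : w k < w k' := (lt_or_gt_of_ne (w.injective.ne hkk'.ne)).resolve_right
      fun h => (code_lt_code hkk' h).ne hplateau
    have hcode := code_mul_swap_eq_update rfl hw hplateau
    have hsum : ∑ i, code (w * swap k k') i = ∑ i, code w i + 1 := by
      rw [hcode, sum_update_succ]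
    have hS := ih (w * swap k k') (hcode ▸ antitone_update_succ hanti hfirst) (by omega)
    have := IsSchubert.step w k hk _ hS
      (by rw [invCount_eq_sum_code, invCount_eq_sum_code, hsum])
    rwa [hcode, ddiff_prod_X_pow_update_succ (by simp [Fin.ext_iff, k']) hplateau] at this

end SchubertDominant

open SchubertDominant

/-- If `w` is dominant (132-avoiding), then its Schubert polynomial equals
`∏_{(i,j) ∈ D(w)} x_i = ∏_i x_i^{c_i(w)}`. -/
theorem schubert_dominant (n : ℕ) (w : Equiv.Perm (Fin n))
    (hdom : ¬ ∃ i j k : Fin n, i < j ∧ j < k ∧ w i < w k ∧ w k < w j) :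
    IsSchubert w (∏ p ∈ rothe n w, X p.1) ∧
      (∏ p ∈ rothe n w, X p.1 : MvPolynomial (Fin n) ℤ) =
        ∏ i : Fin n, X i ^ code w i := by
  rw [prod_rothe]
  exact ⟨isSchubert_prod_X_pow_code w (antitone_code hdom), rfl⟩
end

section
/- The operators m(s_i) on involutions in S_n, defined by m(s_i)·τ = τ if τ(i+1) < τ(i); m(s_i)·τ = s_i τ if τ(i) = i and τ(i+1) = i+1; and m(s_i)·τ = s_i τ s_i otherwise, satisfy the idempotent relation m(s_i)·(m(s_i)·τ) = m(s_i)·τ for all involutions τ. -/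
open Finset

/-- The Richardson–Springer monoid action of the generator `m(s_i)` on involutions:
`m(s_i)·τ = τ` if `τ(i+1) < τ(i)`; `m(s_i)·τ = s_i τ` if `τ` fixes both `i` and `i+1`;
and `m(s_i)·τ = s_i τ s_i` otherwise. -/
def mAct {n : ℕ} (i : Fin n) (τ : Equiv.Perm (Fin n)) : Equiv.Perm (Fin n) :=
  if h : i.val + 1 < n then
    let j : Fin n := ⟨i.val + 1, h⟩
    let s := Equiv.swap i j
    if τ j < τ i then τ
    else if τ i = i ∧ τ j = j then s * τ
    else s * τ * s
  else τ

/-- The involution diagram `D̂(τ)`. -/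
def invDiagram (n : ℕ) (τ : Equiv.Perm (Fin n)) : Finset (Fin n × Fin n) :=
  Finset.univ.filter fun p => p.2 < τ p.1 ∧ p.1 < τ p.2 ∧ p.1 ≤ p.2

/-- The involution length `ℓ̂(τ) = #D̂(τ)`. -/
def invLen {n : ℕ} (τ : Equiv.Perm (Fin n)) : ℕ := (invDiagram n τ).card

/-- The operators `m(s_i)` on involutions are idempotent:
`m(s_i)·(m(s_i)·τ) = m(s_i)·τ`. -/
theorem mAct_idem (n : ℕ) (i : Fin n) (hi : i.val + 1 < n)
    (τ : Equiv.Perm (Fin n)) (hτ : τ * τ = 1) :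
    mAct i (mAct i τ) = mAct i τ := by
  have hinv : ∀ x, τ (τ x) = x := fun x => by
    have := congrArg (fun f => f x) hτ
    simpa using this
  unfold mAct
  rw [dif_pos hi, dif_pos hi]
  set j : Fin n := ⟨i.val + 1, hi⟩ with hj
  set s := Equiv.swap i j with hs
  have hij : i ≠ j := by
    intro h
    have := congrArg Fin.val h
    simp [hj] at this
  have hiltj : i < j := by simp [hj, Fin.lt_def]
  by_cases h1 : τ j < τ i
  · simp only [if_pos h1]
  · by_cases h2 : τ i = i ∧ τ j = j
    · simp only [if_neg h1, if_pos h2]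
      have hkey : (s * τ) j < (s * τ) i := by
        simp only [Equiv.Perm.mul_apply, h2.1, h2.2, hs,
          Equiv.swap_apply_left, Equiv.swap_apply_right]
        exact hiltj
      rw [if_pos hkey]
    · simp only [if_neg h1, if_neg h2]
      have hne : τ i ≠ τ j := fun h => hij (τ.injective h)
      have hle : τ i < τ j := lt_of_le_of_ne (not_lt.mp h1) hne
      have hτij : τ i ≠ j := by
        intro h
        have : τ j = i := by rw [← h, hinv]
        exact h1 (by rw [this, h]; exact hiltj)
      have hτji : τ j ≠ i := by
        intro h
        have : τ i = j := by rw [← h, hinv]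
        exact h1 (by rw [this, h]; exact hiltj)
      have hkey : (s * τ * s) j < (s * τ * s) i := by
        simp only [Equiv.Perm.mul_apply]
        rw [hs, Equiv.swap_apply_left, Equiv.swap_apply_right]
        by_cases ha : τ i = i
        · have hb : τ j ≠ j := fun hb => h2 ⟨ha, hb⟩
          rw [ha, Equiv.swap_apply_left, Equiv.swap_apply_of_ne_of_ne hτji hb]
          rw [Fin.lt_def] at hle ⊢
          have h1v : (τ j).val ≠ j.val := fun h => hb (Fin.ext h)
          have h2v : i.val = (τ i).val := congrArg Fin.val ha.symm
          simp only [hj] at *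
          omega
        · by_cases hb : τ j = j
          · rw [hb, Equiv.swap_apply_right, Equiv.swap_apply_of_ne_of_ne ha hτij]
            rw [Fin.lt_def] at hle ⊢
            have h1v : (τ i).val ≠ i.val := fun h => ha (Fin.ext h)
            have h2v : j.val = (τ j).val := congrArg Fin.val hb.symm
            simp only [hj] at *
            omega
          · rw [Equiv.swap_apply_of_ne_of_ne ha hτij,
              Equiv.swap_apply_of_ne_of_ne hτji hb]
            exact hle
      rw [if_pos hkey]
end

section
/- The operators m(s_i) on involutions defined by m(s_i)·τ = τ if τ(i+1) < τ(i); m(s_i)·τ = s_i τ if τ(i) = i and τ(i+1) = i+1; and m(s_i)·τ = s_i τ s_i otherwise, satisfy the braid relation m(s_i)·(m(s_{i+1})·(m(s_i)·τ)) = m(s_{i+1})·(m(s_i)·(m(s_{i+1})·τ)) for all involutions τ ∈ I_n and 1 ≤ i ≤ n-2. -/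
/-!
The operators `m(s_i)` and `m(s_{i+1})` only look at the positions `i, i+1, i+2` and their
images under `τ`. The set `S` of these at most six points is `τ`-stable, and relabelling it
order-preservingly by `Fin #S` turns `τ` into an involution `σ` that is semiconjugate to it;
the operators commute with this semiconjugacy, while outside `S` all of them act as `τ`.
So the braid relation for `τ` follows from the one for `σ`, an involution on at most six
points, where it is checked exhaustively.
-/

open Finset

open Function Equiv

section

variable {m n : ℕ}

theorem mAct_eq_of_succ_lt {i : Fin n} (hi : i.val + 1 < n) (τ : Perm (Fin n)) :
    mAct i τ =
      if τ ⟨i.val + 1, hi⟩ < τ i then τ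
      else if τ i = i ∧ τ ⟨i.val + 1, hi⟩ = ⟨i.val + 1, hi⟩ then swap i ⟨i.val + 1, hi⟩ * τ
      else swap i ⟨i.val + 1, hi⟩ * τ * swap i ⟨i.val + 1, hi⟩ := by
  simp only [mAct, dif_pos hi]

theorem mAct_apply_of_ne {i x : Fin n} (τ : Perm (Fin n)) (hx : x.val ≠ i.val)
    (hx' : x.val ≠ i.val + 1) (hτx : (τ x).val ≠ i.val) (hτx' : (τ x).val ≠ i.val + 1) :
    mAct i τ x = τ x := by
  by_cases hi : i.val + 1 < n
  · have hne : ∀ y : Fin n, y.val ≠ i.val → y.val ≠ i.val + 1 → swap i ⟨i.val + 1, hi⟩ y = y :=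
      fun y h h' => swap_apply_of_ne_of_ne (Fin.ne_of_val_ne h) (Fin.ne_of_val_ne h')
    rw [mAct_eq_of_succ_lt hi]
    split_ifs <;> simp only [Perm.mul_apply, hne x hx hx', hne (τ x) hτx hτx']
  · simp only [mAct, dif_neg hi]

theorem Function.Semiconj.perm_apply_mem_range_iff {ι α : Type*} {f : ι → α}
    {σ : Perm ι} {τ : Perm α} (h : Semiconj f σ τ) (x : α) :
    τ x ∈ Set.range f ↔ x ∈ Set.range f := by
  constructor
  · rintro ⟨y, hy⟩
    refine ⟨σ.symm y, τ.injective ?_⟩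
    rw [← h, Equiv.apply_symm_apply, hy]
  · rintro ⟨y, rfl⟩
    exact ⟨σ y, h y⟩

theorem Function.Semiconj.mul_self_eq_one {ι α : Type*} {f : ι → α} (hf : Injective f)
    {σ : Perm ι} {τ : Perm α} (h : Semiconj f σ τ) (hτ : τ * τ = 1) : σ * σ = 1 := by
  ext y
  apply hf
  rw [Perm.mul_apply, h, h, ← Perm.mul_apply, hτ, Perm.one_apply, Perm.one_apply]

theorem exists_semiconj_of_mapsTo {ι α : Type*} [Finite ι] {f : ι → α} (hf : Injective f)
    (τ : Perm α) (hτ : ∀ y, τ (f y) ∈ Set.range f) : ∃ σ : Perm ι, Semiconj f σ τ := by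
  choose g hg using hτ
  have hg_inj : Injective g := fun a b hab => hf (τ.injective (by rw [← hg, ← hg, hab]))
  exact ⟨Equiv.ofBijective g (Finite.injective_iff_bijective.mp hg_inj), hg⟩

theorem StrictMono.exists_succ_of_mem_range {f : Fin m → Fin n} (hf : StrictMono f) {p : Fin m}
    {y : Fin n} (hy : y ∈ Set.range f) (hpy : y.val = (f p).val + 1) :
    ∃ hp : p.val + 1 < m, f ⟨p.val + 1, hp⟩ = y := by
  obtain ⟨q, rfl⟩ := hy
  have hpq : p < q := hf.lt_iff_lt.mp (Fin.lt_def.mpr (by omega))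
  have hq : q.val = p.val + 1 := by
    by_contra hne
    have hr : p.val + 1 < m := by omega
    have h1 := hf (show p < ⟨p.val + 1, hr⟩ from Fin.lt_def.mpr (by simp))
    have h2 := hf (show (⟨p.val + 1, hr⟩ : Fin m) < q from Fin.lt_def.mpr (by simp; omega))
    rw [Fin.lt_def] at h1 h2
    omega
  exact ⟨hq ▸ q.isLt, congrArg f (Fin.ext hq.symm)⟩


variable {f : Fin m → Fin n} {σ : Perm (Fin m)} {τ : Perm (Fin n)}

theorem semiconj_mAct (hf : StrictMono f) (h : Semiconj f σ τ) {p : Fin m}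
    (hp : p.val + 1 < m) {i : Fin n} (hi : i.val + 1 < n) (hfp : f p = i)
    (hfp' : f ⟨p.val + 1, hp⟩ = ⟨i.val + 1, hi⟩) : Semiconj f (mAct p σ) (mAct i τ) := by
  subst hfp
  have hlt : σ ⟨p.val + 1, hp⟩ < σ p ↔ τ ⟨(f p).val + 1, hi⟩ < τ (f p) := by
    rw [← hfp', ← h, ← h, hf.lt_iff_lt]
  have hfix : (σ p = p ∧ σ ⟨p.val + 1, hp⟩ = ⟨p.val + 1, hp⟩) ↔
      (τ (f p) = f p ∧ τ ⟨(f p).val + 1, hi⟩ = ⟨(f p).val + 1, hi⟩) := by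
    rw [← hfp', ← h, ← h, hf.injective.eq_iff, hf.injective.eq_iff]
  have hswap : Semiconj f (swap p ⟨p.val + 1, hp⟩) (swap (f p) ⟨(f p).val + 1, hi⟩) :=
    fun y => by rw [← hfp', hf.injective.swap_apply]
  rw [mAct_eq_of_succ_lt hp, mAct_eq_of_succ_lt hi]
  simp only [hlt, hfix]
  split_ifs
  exacts [h, hswap.comp_right h, (hswap.comp_right h).comp_right hswap]

theorem mAct_apply_of_notMem_range (h : Semiconj f σ τ) {p : Fin m}
    (hp : p.val + 1 < m) {i : Fin n} (hi : i.val + 1 < n) (hfp : f p = i)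
    (hfp' : f ⟨p.val + 1, hp⟩ = ⟨i.val + 1, hi⟩) {x : Fin n} (hx : x ∉ Set.range f) :
    mAct i τ x = τ x := by
  have hτx : τ x ∉ Set.range f := by rwa [h.perm_apply_mem_range_iff]
  have hne : ∀ y ∉ Set.range f, y.val ≠ i.val ∧ y.val ≠ i.val + 1 := fun y hy =>
    ⟨fun hyi => hy ⟨p, hfp.trans (Fin.ext hyi.symm)⟩,
      fun hyi => hy ⟨_, hfp'.trans (Fin.ext hyi.symm)⟩⟩
  exact mAct_apply_of_ne τ (hne x hx).1 (hne x hx).2 (hne _ hτx).1 (hne _ hτx).2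

theorem mAct_braid_of_semiconj (hf : StrictMono f) (h : Semiconj f σ τ) {p : Fin m}
    (hp : p.val + 2 < m) {i : Fin n} (hi : i.val + 2 < n) (hfp : f p = i)
    (hfp₁ : f ⟨p.val + 1, Nat.lt_of_succ_lt hp⟩ = ⟨i.val + 1, Nat.lt_of_succ_lt hi⟩)
    (hfp₂ : f ⟨p.val + 2, hp⟩ = ⟨i.val + 2, hi⟩)
    (hσ : mAct p (mAct ⟨p.val + 1, Nat.lt_of_succ_lt hp⟩ (mAct p σ)) =
      mAct ⟨p.val + 1, Nat.lt_of_succ_lt hp⟩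
        (mAct p (mAct ⟨p.val + 1, Nat.lt_of_succ_lt hp⟩ σ))) :
    mAct i (mAct ⟨i.val + 1, Nat.lt_of_succ_lt hi⟩ (mAct i τ)) =
      mAct ⟨i.val + 1, Nat.lt_of_succ_lt hi⟩
        (mAct i (mAct ⟨i.val + 1, Nat.lt_of_succ_lt hi⟩ τ)) := by
  have step₁ {σ' : Perm (Fin m)} {τ' : Perm (Fin n)} (h' : Semiconj f σ' τ') :=
    semiconj_mAct hf h' (by omega) (by omega) hfp hfp₁
  have step₂ {σ' : Perm (Fin m)} {τ' : Perm (Fin n)} (h' : Semiconj f σ' τ') :=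
    semiconj_mAct hf h' (p := ⟨p.val + 1, by omega⟩) hp hi hfp₁ hfp₂
  have off₁ {σ' : Perm (Fin m)} {τ' : Perm (Fin n)} (h' : Semiconj f σ' τ') {x : Fin n}
      (hx : x ∉ Set.range f) :=
    mAct_apply_of_notMem_range h' (by omega) (by omega) hfp hfp₁ hx
  have off₂ {σ' : Perm (Fin m)} {τ' : Perm (Fin n)} (h' : Semiconj f σ' τ') {x : Fin n}
      (hx : x ∉ Set.range f) :=
    mAct_apply_of_notMem_range h' (p := ⟨p.val + 1, by omega⟩) hp hi hfp₁ hfp₂ hx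
  ext x
  by_cases hx : x ∈ Set.range f
  · obtain ⟨y, rfl⟩ := hx
    rw [← step₁ (step₂ (step₁ h)), ← step₂ (step₁ (step₂ h)), hσ]
  · rw [off₁ (step₂ (step₁ h)) hx, off₂ (step₁ h) hx, off₁ h hx,
      off₂ (step₁ (step₂ h)) hx, off₁ (step₂ h) hx, off₂ h hx]

end

set_option maxRecDepth 10000 in
theorem mAct_braid_of_le_six {m : ℕ} (hm : m ≤ 6) (σ : Perm (Fin m)) (hσ : σ * σ = 1)
    (p : Fin m) (hp : p.val + 2 < m) :
    mAct p (mAct ⟨p.val + 1, Nat.lt_of_succ_lt hp⟩ (mAct p σ)) =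
      mAct ⟨p.val + 1, Nat.lt_of_succ_lt hp⟩
        (mAct p (mAct ⟨p.val + 1, Nat.lt_of_succ_lt hp⟩ σ)) := by
  revert σ p
  interval_cases m <;> decide

/-- The operators `m(s_i)` on involutions satisfy the braid relation:
`m(s_i)·(m(s_{i+1})·(m(s_i)·τ)) = m(s_{i+1})·(m(s_i)·(m(s_{i+1})·τ))`. -/
theorem mAct_braid (n : ℕ) (i : Fin n) (hi : i.val + 2 < n)
    (τ : Equiv.Perm (Fin n)) (hτ : τ * τ = 1) :
    mAct i (mAct ⟨i.val + 1, by omega⟩ (mAct i τ)) =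
      mAct ⟨i.val + 1, by omega⟩ (mAct i (mAct ⟨i.val + 1, by omega⟩ τ)) := by
  set j : Fin n := ⟨i.val + 1, by omega⟩
  set k : Fin n := ⟨i.val + 2, hi⟩
  set S : Finset (Fin n) := {i, j, k, τ i, τ j, τ k}
  have hτS : ∀ x ∈ S, τ x ∈ S := by
    have hττ (x : Fin n) : τ (τ x) = x := by rw [← Perm.mul_apply, hτ, Perm.one_apply]
    simp only [S, Finset.mem_insert, Finset.mem_singleton]
    rintro x (rfl | rfl | rfl | rfl | rfl | rfl) <;> simp [hττ]
  set f := S.orderEmbOfFin rfl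
  have hrange : Set.range f = S := S.range_orderEmbOfFin rfl
  obtain ⟨σ, hσ⟩ := exists_semiconj_of_mapsTo f.injective τ fun y => by
    rw [hrange]; exact hτS _ (S.orderEmbOfFin_mem rfl y)
  obtain ⟨p, hfp⟩ : i ∈ Set.range f := by simp [hrange, S]
  obtain ⟨hp₁, hfp₁⟩ := f.strictMono.exists_succ_of_mem_range (p := p) (y := j)
    (by simp [hrange, S]) (by simp [hfp, j])
  obtain ⟨hp₂, hfp₂⟩ := f.strictMono.exists_succ_of_mem_range (p := ⟨p.val + 1, hp₁⟩) (y := k)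
    (by simp [hrange, S]) (by simp [hfp₁, j, k])
  exact mAct_braid_of_semiconj f.strictMono hσ hp₂ hi hfp hfp₁ hfp₂
    (mAct_braid_of_le_six Finset.card_le_six σ (hσ.mul_self_eq_one f.injective hτ) p hp₂)
end

section
/- If τ ∈ I_n is a dominant involution (an involution that is 132-avoiding as a permutation), then the involution Schubert polynomial of τ factors as Ŝ_τ = ∏_{(i,i) ∈ D̂₁(τ)} x_i · ∏_{(i,j) ∈ D̂₂(τ), i<j} (x_i + x_j), where D̂(τ) = {(i,j) : j < τ(i), i < τ(j), i ≤ j}, D̂₁ is its diagonal part and D̂₂ its strictly-off-diagonal part. -/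
open Finset MvPolynomial

/-- `IsInvSchubert τ f` asserts that `f` is the involution Schubert polynomial of
the involution `τ`, via the recursive definition: for the longest permutation `τ_0`,
`Ŝ_{τ_0} = x_1 ⋯ x_{⌊n/2⌋} ∏_{0 < i < j ≤ n-i} (x_i + x_j)` (0-indexed below), and
`Ŝ_τ = ∂_i (Ŝ_{τ'})` whenever `τ' = m(s_i)·τ` has `ℓ̂(τ') = ℓ̂(τ) + 1`. -/
inductive IsInvSchubert {n : ℕ} : Equiv.Perm (Fin n) → MvPolynomial (Fin n) ℤ → Prop
  | base :
      IsInvSchubert (w0 n)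
        ((∏ i ∈ Finset.univ.filter fun i : Fin n => i.val < n / 2, X i) *
          ∏ p ∈ Finset.univ.filter
              fun p : Fin n × Fin n => p.1 < p.2 ∧ p.1.val + p.2.val + 2 ≤ n,
            (X p.1 + X p.2))
  | step (τ : Equiv.Perm (Fin n)) (i : Fin n) (hi : i.val + 1 < n)
      (f : MvPolynomial (Fin n) ℤ) :
      IsInvSchubert (mAct i τ) f →
      invLen (mAct i τ) = invLen τ + 1 →
      IsInvSchubert τ (ddiff i ⟨i.val + 1, hi⟩ f)

/-!
Downward induction on `ℓ̂`. For an involution `τ`, avoiding `132` means that the symmetric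
diagram `{(a, b) | b < τ a ∧ a < τ b}` is a lower set of `Fin n × Fin n`. If `τ ≠ w₀`, let
`i ⋖ j` be the first ascent of `τ` and `s = (i j)`. The lower-set property makes the diagram
stable under `s`, so the product `P(τ)` of the cell factors over `D̂(τ)` is `s`-symmetric.
The involution `σ = m(s_i)·τ` has the diagram of `τ` plus the single cell `{τ i, i}`, all of
whose predecessors already lie in the diagram of `τ` because `τ` decreases up to `i`; so `σ`
is again dominant. The factor `f` of the new cell (`x_i` or `x_i + x_{τ i}`) satisfies
`f - s f = x_i - x_j`, hence `∂_i P(σ) = ∂_i (f P(τ)) = P(τ)`, and the claim for `τ` follows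
from the one for `σ`. For `τ = w₀` the product is the defining polynomial.
-/

theorem IsLowerSet.union_pair_swap {α : Type*} [Preorder α] {S : Set (α × α)}
    (hS : IsLowerSet S) (hsymm : ∀ p ∈ S, p.swap ∈ S) {c : α × α}
    (hc : Set.Iic c ⊆ insert c S) : IsLowerSet (S ∪ {c, c.swap}) := by
  rintro p q hqp (hp | hp | hp)
  · exact Or.inl (hS hqp hp)
  · obtain rfl | hq := hc (hp ▸ hqp)
    · exact Or.inr (Or.inl rfl)
    · exact Or.inl hq
  · obtain rfl : p = c.swap := hp
    have hqc : q.swap ≤ c := by simpa only [Prod.swap_swap] using Prod.swap_le_swap.2 hqp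
    obtain hq | hq := hc hqc
    · exact Or.inr (Or.inr (by rw [← hq, Prod.swap_swap]; rfl))
    · exact Or.inl (by simpa using hsymm _ hq)

theorem Function.Involutive.apply_ne_of_apply_lt_apply {α : Type*} [Preorder α]
    {f : α → α} (hf : Involutive f) {a b : α} (hab : a < b) (hlt : f a < f b) : f a ≠ b := by
  intro h
  have hba : f b = a := by rw [← h, hf]
  rw [h, hba] at hlt
  exact hlt.not_gt hab

namespace InvSchubert

open Equiv Function

variable {n : ℕ}

/-- For an involution this is the Rothe diagram; `invDiagram n τ` is its part on or above the
diagonal. -/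
def diagramSet (τ : Perm (Fin n)) : Set (Fin n × Fin n) := {p | p.2 < τ p.1 ∧ p.1 < τ p.2}

def Avoids132 (τ : Perm (Fin n)) : Prop :=
  ¬ ∃ i j k : Fin n, i < j ∧ j < k ∧ τ i < τ k ∧ τ k < τ j

section Diagram

variable {τ : Perm (Fin n)}

theorem mem_diagramSet {a b : Fin n} : (a, b) ∈ diagramSet τ ↔ b < τ a ∧ a < τ b := Iff.rfl

theorem mem_diagramSet_comm {a b : Fin n} : (a, b) ∈ diagramSet τ ↔ (b, a) ∈ diagramSet τ :=
  and_comm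

theorem mem_invDiagram {p : Fin n × Fin n} :
    p ∈ invDiagram n τ ↔ p ∈ diagramSet τ ∧ p.1 ≤ p.2 := by
  simp [invDiagram, diagramSet, and_assoc]

theorem Avoids132.mem_diagramSet_of_le_left (h132 : Avoids132 τ) (hτ : Involutive τ)
    {a a' b : Fin n} (hab : (a, b) ∈ diagramSet τ) (ha : a' ≤ a) : (a', b) ∈ diagramSet τ := by
  obtain ⟨hb, ha'⟩ := hab
  refine ⟨?_, ha.trans_lt ha'⟩
  by_contra! hle
  obtain hb' | hb' := hle.eq_or_lt
  · exact (ha.trans_lt ha').ne (by rw [← hb', hτ])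
  · refine h132 ⟨a', a, τ b, ha.lt_of_ne ?_, ha', by rwa [hτ], by rwa [hτ]⟩
    rintro rfl
    exact hb.not_ge hle

theorem avoids132_iff_isLowerSet (hτ : Involutive τ) :
    Avoids132 τ ↔ IsLowerSet (diagramSet τ) := by
  constructor
  · rintro h132 ⟨a, b⟩ ⟨a', b'⟩ ⟨ha, hb⟩ hab
    have hab' := h132.mem_diagramSet_of_le_left hτ hab ha
    exact mem_diagramSet_comm.1
      (h132.mem_diagramSet_of_le_left hτ (mem_diagramSet_comm.1 hab') hb)
  · rintro hD ⟨a, b, c, hab, hbc, hac, hcb⟩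
    have hbc' : (b, τ c) ∈ diagramSet τ := ⟨hcb, by rwa [hτ]⟩
    have := (hD (show (a, τ c) ≤ (b, τ c) from ⟨hab.le, le_rfl⟩) hbc').1
    exact hac.not_gt (by simpa using this)

end Diagram

section Polynomial

variable {τ σ : Perm (Fin n)}

noncomputable def cellFactor (a b : Fin n) : MvPolynomial (Fin n) ℤ :=
  if a = b then X a else X a + X b

theorem cellFactor_comm (a b : Fin n) : cellFactor a b = cellFactor b a := by
  obtain rfl | h := eq_or_ne a b
  · rfl
  · simp [cellFactor, h, h.symm, add_comm]

theorem rename_cellFactor (s : Perm (Fin n)) (a b : Fin n) :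
    rename s (cellFactor a b) = cellFactor (s a) (s b) := by
  simp only [cellFactor, s.injective.eq_iff]
  split_ifs <;> simp

theorem cellFactor_sub_rename_swap {i j k : Fin n} (hij : i ≠ j) (hkj : k ≠ j) :
    cellFactor k i - rename (swap i j) (cellFactor k i) = X i - X j := by
  rw [rename_cellFactor, swap_apply_left]
  obtain rfl | hki := eq_or_ne k i
  · simp [cellFactor]
  · simp [cellFactor, hki, swap_apply_of_ne_of_ne hki hkj, hkj]

def sortPair (a b : Fin n) : Fin n × Fin n := (min a b, max a b)

theorem cellFactor_sortPair (a b : Fin n) :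
    cellFactor (sortPair a b).1 (sortPair a b).2 = cellFactor a b := by
  rcases le_total a b with h | h
  · simp [sortPair, h]
  · simp [sortPair, h, cellFactor_comm a b]

theorem sortPair_mem_invDiagram {a b : Fin n} :
    sortPair a b ∈ invDiagram n τ ↔ (a, b) ∈ diagramSet τ := by
  rcases le_total a b with h | h
  · simp [sortPair, h, mem_invDiagram]
  · simp [sortPair, h, mem_invDiagram, mem_diagramSet, and_comm]

noncomputable def diagramPoly (τ : Perm (Fin n)) : MvPolynomial (Fin n) ℤ :=
  ∏ p ∈ invDiagram n τ, cellFactor p.1 p.2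

theorem diagramPoly_eq_prod_mul_prod (τ : Perm (Fin n)) :
    diagramPoly τ = (∏ i ∈ univ.filter fun i : Fin n => i < τ i, X i) *
      ∏ p ∈ (invDiagram n τ).filter fun p => p.1 < p.2, (X p.1 + X p.2) := by
  rw [diagramPoly, ← prod_filter_mul_prod_filter_not (invDiagram n τ) fun p => p.1 = p.2]
  congr 1
  · refine prod_nbij' (fun p => p.1) (fun i => (i, i)) ?_ ?_ ?_ ?_ ?_ <;>
      aesop (add simp [mem_invDiagram, mem_diagramSet, cellFactor])
  · refine prod_congr (filter_congr fun p hp => ?_) fun p hp => ?_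
    · simp [lt_iff_le_and_ne, (mem_invDiagram.1 hp).2]
    · simp [cellFactor, (mem_filter.1 hp).2.ne]

theorem rename_diagramPoly {s : Perm (Fin n)} (hs : Involutive s)
    (hD : ∀ p ∈ diagramSet τ, (s p.1, s p.2) ∈ diagramSet τ) :
    rename s (diagramPoly τ) = diagramPoly τ := by
  have hsort : ∀ p ∈ invDiagram n τ, sortPair (s (sortPair (s p.1) (s p.2)).1)
      (s (sortPair (s p.1) (s p.2)).2) = p := by
    rintro ⟨a, b⟩ hp
    have hab := (mem_invDiagram.1 hp).2
    rcases le_total (s a) (s b) with h | h <;> simp [sortPair, h, hs a, hs b, hab]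
  rw [diagramPoly, map_prod]
  refine prod_nbij' (fun p => sortPair (s p.1) (s p.2)) (fun p => sortPair (s p.1) (s p.2))
    (fun p hp => ?_) (fun p hp => ?_) hsort hsort fun p _ => ?_
  · exact sortPair_mem_invDiagram.2 (hD p (mem_invDiagram.1 hp).1)
  · exact sortPair_mem_invDiagram.2 (hD p (mem_invDiagram.1 hp).1)
  · rw [rename_cellFactor, cellFactor_sortPair]

theorem invDiagram_eq_insert {a b : Fin n}
    (h : diagramSet σ = diagramSet τ ∪ {(a, b), (b, a)}) :
    invDiagram n σ = insert (sortPair a b) (invDiagram n τ) := by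
  ext ⟨x, y⟩
  simp only [mem_invDiagram, h, Finset.mem_insert, sortPair, Set.mem_union, Set.mem_insert_iff,
    Set.mem_singleton_iff, Prod.mk.injEq]
  grind

theorem diagramPoly_eq_mul {a b : Fin n} (h : diagramSet σ = diagramSet τ ∪ {(a, b), (b, a)})
    (hab : (a, b) ∉ diagramSet τ) : diagramPoly σ = cellFactor a b * diagramPoly τ := by
  rw [diagramPoly, invDiagram_eq_insert h, prod_insert (mt sortPair_mem_invDiagram.1 hab),
    cellFactor_sortPair, diagramPoly]

theorem invLen_eq_add_one {a b : Fin n} (h : diagramSet σ = diagramSet τ ∪ {(a, b), (b, a)})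
    (hab : (a, b) ∉ diagramSet τ) : invLen σ = invLen τ + 1 := by
  rw [invLen, invDiagram_eq_insert h, card_insert_of_notMem (mt sortPair_mem_invDiagram.1 hab),
    invLen]

theorem invLen_le (τ : Perm (Fin n)) : invLen τ ≤ n * n := by
  unfold invLen invDiagram
  simpa using card_filter_le (univ : Finset (Fin n × Fin n)) _

theorem diagramPoly_w0 : diagramPoly (w0 n) =
    (∏ i ∈ univ.filter fun i : Fin n => i.val < n / 2, X i) *
      ∏ p ∈ univ.filter fun p : Fin n × Fin n => p.1 < p.2 ∧ p.1.val + p.2.val + 2 ≤ n,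
        (X p.1 + X p.2) := by
  have hw0 : ∀ x : Fin n, (w0 n x : ℕ) = n - 1 - x := fun x => by
    simp only [w0, Fin.revPerm_apply, Fin.val_rev]
    omega
  rw [diagramPoly_eq_prod_mul_prod]
  congr 1
  · congr 1
    ext a
    simp only [Finset.mem_filter, Finset.mem_univ, true_and, Fin.lt_def, hw0]
    omega
  · congr 1
    ext p
    simp only [invDiagram, Finset.mem_filter, Finset.mem_univ, true_and, Fin.lt_def, Fin.le_def,
      hw0]
    omega

theorem ddiff_eq_of_sub_eq {i j : Fin n} (hij : i ≠ j) {f g : MvPolynomial (Fin n) ℤ}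
    (h : f - rename (swap i j) f = (X i - X j) * g) : ddiff i j f = g := by
  have hex : ∃ g, f - rename (swap i j) f = (X i - X j) * g := ⟨g, h⟩
  rw [ddiff, dif_pos hex]
  exact mul_left_cancel₀ (sub_ne_zero.2 (X_injective.ne hij)) (hex.choose_spec.symm.trans h)

theorem ddiff_mul_of_rename_eq {i j : Fin n} (hij : i ≠ j) {f g : MvPolynomial (Fin n) ℤ}
    (hf : f - rename (swap i j) f = X i - X j) (hg : rename (swap i j) g = g) :
    ddiff i j (f * g) = g :=
  ddiff_eq_of_sub_eq hij (by rw [map_mul, hg, ← sub_mul, hf])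

end Polynomial

section Ascent

variable {τ : Perm (Fin n)} {i j : Fin n}

theorem lt_swap_apply_iff (hij : i ⋖ j) {x y : Fin n} (h : x = y → x ≠ i ∧ x ≠ j) :
    x < swap i j y ↔ swap i j x < y := by
  have hj : (i : ℕ) + 1 = j := Nat.covBy_iff_add_one_eq.1 (Fin.covBy_iff.1 hij)
  simp only [swap_apply_def]
  split_ifs <;> simp only [Fin.lt_def, Fin.ext_iff] at * <;> omega

theorem mem_diagramSet_swap_conj_iff (hij : i ⋖ j) {a b : Fin n}
    (ha : a = τ (swap i j b) → a ≠ i ∧ a ≠ j) (hb : b = τ (swap i j a) → b ≠ i ∧ b ≠ j) :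
    (a, b) ∈ diagramSet (swap i j * τ * swap i j) ↔
      (swap i j a, swap i j b) ∈ diagramSet τ := by
  simp only [mem_diagramSet, Perm.mul_apply]
  rw [lt_swap_apply_iff hij hb, lt_swap_apply_iff hij ha]

theorem mem_diagramSet_swap_left_iff (hτ : Involutive τ) (hD : IsLowerSet (diagramSet τ))
    (hij : i ⋖ j) (hlt : τ i < τ j) {a b : Fin n} :
    (swap i j a, b) ∈ diagramSet τ ↔ (a, b) ∈ diagramSet τ := by
  have hup : ∀ {b}, (i, b) ∈ diagramSet τ → (j, b) ∈ diagramSet τ := by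
    rintro b ⟨hbi, hib⟩
    refine ⟨hbi.trans hlt, (hij.ge_of_gt hib).lt_of_ne' fun hbj => ?_⟩
    exact (hbi.trans hlt).ne (by rw [← hbj, hτ])
  have hdown : ∀ {b}, (j, b) ∈ diagramSet τ → (i, b) ∈ diagramSet τ :=
    hD ⟨hij.le, le_rfl⟩
  rw [swap_apply_def]
  split_ifs with hai haj
  · exact hai ▸ ⟨hdown, hup⟩
  · exact haj ▸ ⟨hup, hdown⟩
  · rfl

theorem mem_diagramSet_swap_iff (hτ : Involutive τ) (hD : IsLowerSet (diagramSet τ))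
    (hij : i ⋖ j) (hlt : τ i < τ j) {a b : Fin n} :
    (swap i j a, swap i j b) ∈ diagramSet τ ↔ (a, b) ∈ diagramSet τ := by
  rw [mem_diagramSet_swap_left_iff hτ hD hij hlt, mem_diagramSet_comm,
    mem_diagramSet_swap_left_iff hτ hD hij hlt, mem_diagramSet_comm]

theorem swap_apply_notMem_diagramSet (hτ : Involutive τ) (hD : IsLowerSet (diagramSet τ))
    (hij : i ⋖ j) (hlt : τ i < τ j) : (swap i j (τ j), j) ∉ diagramSet τ := fun h => by
  rw [← mem_diagramSet_swap_iff hτ hD hij hlt, swap_apply_self] at h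
  exact h.2.not_gt (by simpa using hlt)

theorem lt_apply_of_lt_apply (hτ : Involutive τ) (hanti : StrictAntiOn τ (Set.Iic i))
    {k x : Fin n} (hk : k ≤ i) (hx : x < τ k) : k < τ x := by
  by_contra! h
  obtain h | h := h.eq_or_lt
  · exact hx.ne (by rw [← h, hτ])
  · exact (hanti (h.le.trans hk) hk h).not_gt (by rwa [hτ])

theorem Iic_subset_insert_diagramSet (hτ : Involutive τ) (hanti : StrictAntiOn τ (Set.Iic i)) :
    Set.Iic (τ i, i) ⊆ insert (τ i, i) (diagramSet τ) := by
  rintro ⟨a, b⟩ hab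
  obtain ⟨ha, hb⟩ := Prod.mk_le_mk.1 hab
  rw [Set.mem_insert_iff, or_iff_not_imp_left]
  intro hne
  have hab : a < τ b := by
    obtain rfl | hb := hb.eq_or_lt
    · exact ha.lt_of_ne fun h => hne (by rw [h])
    · exact ha.trans_lt (hanti hb.le Set.self_mem_Iic hb)
  exact ⟨lt_apply_of_lt_apply hτ hanti hb hab, hab⟩

theorem apply_eq_self_of_apply_eq_self (hD : IsLowerSet (diagramSet τ)) (hij : i ⋖ j)
    (hlt : τ i < τ j) (hi : τ i = i) : τ j = j := by
  by_contra hj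
  have hjj : j < τ j := (hij.ge_of_gt (hi ▸ hlt)).lt_of_ne' hj
  have hji : j < τ i := (hD (show (i, j) ≤ (j, j) from ⟨hij.le, le_rfl⟩) ⟨hjj, hjj⟩).1
  exact (hi ▸ hji).not_gt hij.lt

theorem diagramSet_swap_mul (hij : i ⋖ j) (hi : τ i = i) (hj : τ j = j) :
    diagramSet (swap i j * τ) = insert (i, i) (diagramSet τ) := by
  have hij' : (i : ℕ) + 1 = j := Nat.covBy_iff_add_one_eq.1 (Fin.covBy_iff.1 hij)
  have key : ∀ x, (τ x = i ↔ x = i) ∧ (τ x = j ↔ x = j) := fun x =>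
    ⟨τ.injective.eq_iff' hi, τ.injective.eq_iff' hj⟩
  ext ⟨a, b⟩
  have ka := key a
  have kb := key b
  simp only [mem_diagramSet, Set.mem_insert_iff, Prod.mk.injEq, Perm.mul_apply, swap_apply_def]
  split_ifs <;> simp only [Fin.lt_def, Fin.ext_iff] at * <;> omega

theorem apply_mem_diagramSet_swap_conj (hτ : Involutive τ) (hij : i ⋖ j) (hlt : τ i < τ j)
    (hi : τ i ≠ i) :
    (τ i, i) ∈ diagramSet (swap i j * τ * swap i j) := by
  have hsτi : swap i j (τ i) = τ i :=
    swap_apply_of_ne_of_ne hi (hτ.apply_ne_of_apply_lt_apply hij.lt hlt)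
  refine ⟨?_, ?_⟩
  · simp [hsτi, hτ i, hij.lt]
  · simpa [lt_swap_apply_iff hij (fun h => absurd (τ.injective h) hij.ne), hsτi] using hlt

theorem swap_apply_notMem_diagramSet_swap_conj (hτ : Involutive τ) (hij : i < j) :
    (swap i j (τ j), j) ∉ diagramSet (swap i j * τ * swap i j) := fun h => by
  simpa [hτ j, hij.not_gt] using h.1

theorem diagramSet_swap_conj (hτ : Involutive τ) (hD : IsLowerSet (diagramSet τ)) (hij : i ⋖ j)
    (hlt : τ i < τ j) (hi : τ i ≠ i) :
    diagramSet (swap i j * τ * swap i j) = diagramSet τ ∪ {(τ i, i), (i, τ i)} := by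
  set s := swap i j
  set T := diagramSet τ ∪ {(τ i, i), (i, τ i)}
  have hτj : τ i ≠ j := hτ.apply_ne_of_apply_lt_apply hij.lt hlt
  have hsτi : s (τ i) = τ i := swap_apply_of_ne_of_ne hi hτj
  have hT : ∀ {a b}, (a, b) ∈ T ↔ (b, a) ∈ T := by
    simp only [T, Set.mem_union, Set.mem_insert_iff, Set.mem_singleton_iff, Prod.mk.injEq]
    intro a b
    rw [mem_diagramSet_comm]
    tauto
  have hnotmem_j : (s (τ j), j) ∉ T := by
    simp only [T, Set.mem_union, Set.mem_insert_iff, Set.mem_singleton_iff, Prod.mk.injEq, not_or]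
    exact ⟨swap_apply_notMem_diagramSet hτ hD hij hlt, fun h => hij.ne h.2.symm,
      fun h => hτj h.2.symm⟩
  -- Conjugating by `s` moves the diagram by `s` (which fixes it), except where
  -- `lt_swap_apply_iff` fails: at the cells with `b = τ (s a) ∈ {i, j}` and their transposes.
  have hexc : ∀ a b, b = τ (s a) → b = i ∨ b = j →
      ((a, b) ∈ diagramSet (s * τ * s) ↔ (a, b) ∈ T) := by
    intro a b hab hb
    have ha : a = s (τ b) := by rw [hab, hτ, swap_apply_self]
    rcases hb with hb | hb <;> rw [ha, hb]
    · rw [hsτi]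
      exact iff_of_true (apply_mem_diagramSet_swap_conj hτ hij hlt hi) (Or.inr (Or.inl rfl))
    · exact iff_of_false (swap_apply_notMem_diagramSet_swap_conj hτ hij.lt) hnotmem_j
  ext ⟨a, b⟩
  by_cases hb : b = τ (s a) ∧ (b = i ∨ b = j)
  · exact hexc a b hb.1 hb.2
  by_cases ha : a = τ (s b) ∧ (a = i ∨ a = j)
  · rw [mem_diagramSet_comm, hT]
    exact hexc b a ha.1 ha.2
  rw [mem_diagramSet_swap_conj_iff hij (by tauto) (by tauto),
    mem_diagramSet_swap_iff hτ hD hij hlt]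
  have hnew : ¬(a = τ i ∧ b = i) ∧ ¬(a = i ∧ b = τ i) := by
    refine ⟨fun ⟨ha', hb'⟩ => hb ⟨?_, Or.inl hb'⟩, fun ⟨ha', hb'⟩ => ha ⟨?_, Or.inl ha'⟩⟩ <;>
      rw [ha', hb', hsτi, hτ]
  simp only [T, Set.mem_union, Set.mem_insert_iff, Set.mem_singleton_iff, Prod.mk.injEq]
  tauto

theorem involutive_swap_mul_mul_swap (hτ : Involutive τ) (a b : Fin n) :
    Involutive (swap a b * τ * swap a b) := fun x => by
  simp [hτ _]

theorem involutive_swap_mul (hτ : Involutive τ) (hi : τ i = i) (hj : τ j = j) :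
    Involutive (swap i j * τ) := by
  have hcomm : ∀ y, τ (swap i j y) = swap i j (τ y) := fun y => by
    rw [← Perm.mul_apply, mul_swap_eq_swap_mul, hi, hj, Perm.mul_apply]
  intro x
  simp only [Perm.mul_apply, hcomm, swap_apply_self, hτ x]

theorem mAct_eq_ite (hD : IsLowerSet (diagramSet τ)) (hij : i ⋖ j) (hlt : τ i < τ j) :
    mAct i τ = if τ i = i then swap i j * τ else swap i j * τ * swap i j := by
  have hj : (i : ℕ) + 1 = j := Nat.covBy_iff_add_one_eq.1 (Fin.covBy_iff.1 hij)
  have hi : (i : ℕ) + 1 < n := hj ▸ j.isLt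
  obtain rfl : (⟨i + 1, hi⟩ : Fin n) = j := Fin.ext hj
  rw [mAct, dif_pos hi]
  simp only [if_neg hlt.not_gt]
  by_cases hfix : τ i = i
  · simp [hfix, apply_eq_self_of_apply_eq_self hD hij hlt hfix]
  · simp [hfix]

theorem diagramSet_mAct (hτ : Involutive τ) (hD : IsLowerSet (diagramSet τ)) (hij : i ⋖ j)
    (hlt : τ i < τ j) : diagramSet (mAct i τ) = diagramSet τ ∪ {(τ i, i), (i, τ i)} := by
  rw [mAct_eq_ite hD hij hlt]
  split_ifs with hfix
  · rw [diagramSet_swap_mul hij hfix (apply_eq_self_of_apply_eq_self hD hij hlt hfix), hfix]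
    rw [Set.pair_eq_singleton, Set.union_singleton]
  · exact diagramSet_swap_conj hτ hD hij hlt hfix

theorem involutive_mAct (hτ : Involutive τ) (hD : IsLowerSet (diagramSet τ)) (hij : i ⋖ j)
    (hlt : τ i < τ j) : Involutive (mAct i τ) := by
  rw [mAct_eq_ite hD hij hlt]
  split_ifs with hfix
  · exact involutive_swap_mul hτ hfix (apply_eq_self_of_apply_eq_self hD hij hlt hfix)
  · exact involutive_swap_mul_mul_swap hτ i j

theorem isLowerSet_diagramSet_mAct (hτ : Involutive τ) (hD : IsLowerSet (diagramSet τ))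
    (hij : i ⋖ j) (hlt : τ i < τ j) (hanti : StrictAntiOn τ (Set.Iic i)) :
    IsLowerSet (diagramSet (mAct i τ)) := by
  rw [diagramSet_mAct hτ hD hij hlt]
  exact hD.union_pair_swap (fun p hp => mem_diagramSet_comm.1 hp)
    (Iic_subset_insert_diagramSet hτ hanti)

end Ascent

theorem eq_w0_or_exists_first_ascent (τ : Perm (Fin n)) :
    τ = w0 n ∨ ∃ i j, i ⋖ j ∧ τ i < τ j ∧ StrictAntiOn τ (Set.Iic i) := by
  by_cases h : ∃ i j, i ⋖ j ∧ τ i < τ j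
  · obtain ⟨i, ⟨j, hij, hlt⟩, hmin⟩ :=
      WellFounded.has_min wellFounded_lt {i | ∃ j, i ⋖ j ∧ τ i < τ j} h
    refine Or.inr ⟨i, j, hij, hlt, strictAntiOn_Iic_of_succ_lt fun m hm => ?_⟩
    have hcov := Order.covBy_succ_of_not_isMax hm.not_isMax
    exact (not_lt.1 fun h => hmin m ⟨_, hcov, h⟩ hm).lt_of_ne (τ.injective.ne hcov.ne')
  · simp only [not_exists, not_and, not_lt] at h
    have hanti : StrictAnti τ := strictAnti_of_succ_lt fun a ha =>
      have hcov := Order.covBy_succ_of_not_isMax ha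
      (h a _ hcov).lt_of_ne (τ.injective.ne hcov.ne')
    have hid := (hanti.comp Fin.rev_strictAnti).eq_id
    refine Or.inl (Equiv.ext fun x => ?_)
    simpa [w0] using congrFun hid x.rev

theorem isInvSchubert_diagramPoly (τ : Perm (Fin n)) (hτ : Involutive τ) (h132 : Avoids132 τ) :
    IsInvSchubert τ (diagramPoly τ) := by
  obtain rfl | ⟨i, j, hij, hlt, hanti⟩ := eq_w0_or_exists_first_ascent τ
  · rw [diagramPoly_w0]
    exact .base
  have hD := (avoids132_iff_isLowerSet hτ).1 h132
  have hj : (i : ℕ) + 1 = j := Nat.covBy_iff_add_one_eq.1 (Fin.covBy_iff.1 hij)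
  have hi : (i : ℕ) + 1 < n := hj ▸ j.isLt
  have hσ := diagramSet_mAct hτ hD hij hlt
  have hnew : (τ i, i) ∉ diagramSet τ := fun h => by simpa [hτ i] using h.2
  have hlen := invLen_eq_add_one hσ hnew
  have ih := isInvSchubert_diagramPoly (mAct i τ) (involutive_mAct hτ hD hij hlt)
    ((avoids132_iff_isLowerSet (involutive_mAct hτ hD hij hlt)).2
      (isLowerSet_diagramSet_mAct hτ hD hij hlt hanti))
  obtain rfl : (⟨i + 1, hi⟩ : Fin n) = j := Fin.ext hj
  have hsymm : rename (swap i ⟨i + 1, hi⟩) (diagramPoly τ) = diagramPoly τ :=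
    rename_diagramPoly (fun x => swap_apply_self _ _ x)
      fun p hp => (mem_diagramSet_swap_iff hτ hD hij hlt).2 hp
  have hfac := cellFactor_sub_rename_swap hij.ne (hτ.apply_ne_of_apply_lt_apply hij.lt hlt)
  rw [diagramPoly_eq_mul hσ hnew] at ih
  have hstep := IsInvSchubert.step τ i hi _ ih hlen
  rwa [ddiff_mul_of_rename_eq hij.ne hfac hsymm] at hstep
termination_by n * n - invLen τ
decreasing_by
  have := invLen_le (mAct i τ)
  omega

end InvSchubert

/-- If `τ` is a dominant involution (an involution that is 132-avoiding as a
permutation), then its involution Schubert polynomial factors as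
`Ŝ_τ = ∏_{(i,i) ∈ D̂₁(τ)} x_i · ∏_{(i,j) ∈ D̂₂(τ)} (x_i + x_j)`. -/
theorem inv_schubert_dominant (n : ℕ) (τ : Equiv.Perm (Fin n)) (hτ : τ * τ = 1)
    (hdom : ¬ ∃ i j k : Fin n, i < j ∧ j < k ∧ τ i < τ k ∧ τ k < τ j) :
    IsInvSchubert τ
      ((∏ i ∈ Finset.univ.filter fun i : Fin n => i < τ i, X i) *
        ∏ p ∈ (invDiagram n τ).filter fun p => p.1 < p.2, (X p.1 + X p.2)) := by
  rw [← InvSchubert.diagramPoly_eq_prod_mul_prod]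
  exact InvSchubert.isInvSchubert_diagramPoly τ
    (fun x => by rw [← Equiv.Perm.mul_apply, hτ, Equiv.Perm.one_apply]) hdom
end

section
/- The weak order on involutions I_n, defined as the transitive closure of τ → m(s_i)·τ for τ ≠ m(s_i)·τ, has the identity as unique minimal element and the longest permutation w_0 as unique maximal element; moreover, from any involution τ ≠ w_0 there exists i with m(s_i)·τ ≠ τ, and the involution length of m(s_i)·τ is ℓ̂(τ) + 1 whenever m(s_i)·τ ≠ τ. -/
open Finset

/-- `applyM [i_1, …, i_k] τ = m(s_{i_1}) ⋯ m(s_{i_k}) · τ`. -/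
def applyM {n : ℕ} (L : List (Fin n)) (τ : Equiv.Perm (Fin n)) : Equiv.Perm (Fin n) :=
  L.foldr mAct τ

/-!
Let `exc τ = #(excedances τ)` count the `a` with `a < τ a`; for an involution these are the
2-cycles. Splitting `D̂(τ)` along its diagonal, and the inversions `(a, b)` of `τ` according
to how `a` compares with `τ b`, gives `2 ℓ̂(τ) = ℓ(τ) + exc τ`. At an ascent `τ i < τ (i + 1)`,
the move `τ ↦ s_i τ` (when `τ` fixes `i` and `i + 1`) raises both `ℓ` and `exc` by one, and
`τ ↦ s_i τ s_i` raises `ℓ` by two and keeps `exc`; either way `ℓ̂` rises by exactly one.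
An involution without ascents is `w_0`, one without descents is the identity, and every descent of
`τ` is undone by a move from an involution of smaller length, so induction on `ℓ̂` connects `1`
to `τ` and `τ` to `w_0`.
-/

open Equiv Relation

section

theorem Equiv.Perm.apply_apply_of_mul_self {α : Type*} {τ : Perm α} (hτ : τ * τ = 1) (x : α) :
    τ (τ x) = x := by
  rw [← Perm.mul_apply, hτ, Perm.one_apply]

theorem Equiv.commute_swap_of_swap_apply_eq {α : Type*} [DecidableEq α] {τ : Perm α} {a b : α}
    (h : swap (τ a) (τ b) = swap a b) : Commute (swap a b) τ :=
  eq_mul_inv_iff_mul_eq.1 (by rw [← swap_apply_apply, h])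

theorem mul_mul_self_eq_one_of_commute {M : Type*} [Monoid M] {s t : M} (hs : s * s = 1)
    (ht : t * t = 1) (hc : Commute s t) : s * t * (s * t) = 1 := by
  rw [hc.symm.mul_mul_mul_comm, hs, ht, one_mul]

theorem conj_mul_self_eq_one {M : Type*} [Monoid M] {s t : M} (hs : s * s = 1)
    (ht : t * t = 1) : s * t * s * (s * t * s) = 1 := by
  calc s * t * s * (s * t * s) = s * (t * (s * s) * t) * s := by simp only [mul_assoc]
    _ = 1 := by rw [hs, mul_one, ht, mul_one, hs]

theorem Fin.strictMono_of_lt_of_succ_eq {α : Type*} [Preorder α] {n : ℕ} {f : Fin n → α}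
    (h : ∀ i j : Fin n, i.val + 1 = j.val → f i < f j) : StrictMono f := by
  cases n with
  | zero => exact fun a => a.elim0
  | succ m => exact Fin.strictMono_iff_lt_succ.2 fun i => h _ _ (by simp)

theorem Fin.strictAnti_of_lt_of_succ_eq {α : Type*} [Preorder α] {n : ℕ} {f : Fin n → α}
    (h : ∀ i j : Fin n, i.val + 1 = j.val → f j < f i) : StrictAnti f := by
  cases n with
  | zero => exact fun a => a.elim0
  | succ m => exact Fin.strictAnti_iff_succ_lt.2 fun i => h _ _ (by simp)

variable {n : ℕ} {i j : Fin n}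

theorem Fin.swap_lt_swap_iff_of_succ_eq (hij : i.val + 1 = j.val) (x y : Fin n) :
    swap i j x < swap i j y ↔ x < y ∧ ¬(x = i ∧ y = j) ∨ x = j ∧ y = i := by
  simp only [swap_apply_def]
  split_ifs <;> simp only [Fin.lt_def, Fin.ext_iff] at * <;> omega

theorem Fin.lt_of_succ_eq (hij : i.val + 1 = j.val) : i < j := by
  rw [Fin.lt_def]; omega

theorem Equiv.Perm.eq_one_of_forall_lt_of_succ_eq {τ : Perm (Fin n)}
    (h : ∀ i j : Fin n, i.val + 1 = j.val → τ i < τ j) : τ = 1 :=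
  Perm.ext fun _ => (Fin.strictMono_of_lt_of_succ_eq h).apply_eq

theorem Equiv.Perm.eq_w0_of_forall_lt_of_succ_eq {τ : Perm (Fin n)}
    (h : ∀ i j : Fin n, i.val + 1 = j.val → τ j < τ i) : τ = w0 n := by
  ext x : 1
  exact Fin.rev_eq_iff.1 (Fin.rev_strictAnti.comp (Fin.strictAnti_of_lt_of_succ_eq h)).apply_eq

theorem Equiv.Perm.exists_lt_of_ne_one {τ : Perm (Fin n)} (h : τ ≠ 1) :
    ∃ i j : Fin n, i.val + 1 = j.val ∧ τ j < τ i := by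
  by_contra! hno
  exact h (eq_one_of_forall_lt_of_succ_eq fun i j hij =>
    (hno i j hij).lt_of_ne (τ.injective.ne (Fin.lt_of_succ_eq hij).ne))

theorem Equiv.Perm.exists_lt_of_ne_w0 {τ : Perm (Fin n)} (h : τ ≠ w0 n) :
    ∃ i j : Fin n, i.val + 1 = j.val ∧ τ i < τ j := by
  by_contra! hno
  exact h (eq_w0_of_forall_lt_of_succ_eq fun i j hij =>
    (hno i j hij).lt_of_ne (τ.injective.ne (Fin.lt_of_succ_eq hij).ne'))

def inversions (w : Perm (Fin n)) : Finset (Fin n × Fin n) :=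
  univ.filter fun p => p.1 < p.2 ∧ w p.2 < w p.1

theorem mem_inversions {w : Perm (Fin n)} {p : Fin n × Fin n} :
    p ∈ inversions w ↔ p.1 < p.2 ∧ w p.2 < w p.1 := by
  simp [inversions]

theorem invCount_eq_card_inversions (w : Perm (Fin n)) : invCount w = #(inversions w) := rfl

theorem invCount_inv (w : Perm (Fin n)) : invCount w⁻¹ = invCount w :=
  card_bij' (fun p _ => (w⁻¹ p.2, w⁻¹ p.1)) (fun p _ => (w p.2, w p.1)) (by simp +contextual)
    (by simp +contextual) (by simp) (by simp)

theorem invCount_mul_swap {w : Perm (Fin n)} (hij : i.val + 1 = j.val) (h : w i < w j) :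
    invCount (w * swap i j) = invCount w + 1 := by
  have key : inversions (w * swap i j) =
      (insert (j, i) (inversions w)).map (prodCongr (swap i j) (swap i j)).toEmbedding := by
    ext ⟨a, b⟩
    obtain ⟨x, rfl⟩ := (swap i j).surjective a
    obtain ⟨y, rfl⟩ := (swap i j).surjective b
    rw [mem_map_equiv, mem_insert, mem_inversions, mem_inversions]
    simp only [prodCongr_symm, symm_swap, prodCongr_apply, Prod.map, swap_apply_self,
      Perm.mul_apply, Fin.swap_lt_swap_iff_of_succ_eq hij, Prod.mk.injEq]
    constructor
    · rintro ⟨⟨hxy, -⟩ | hxy, hw⟩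
      · exact Or.inr ⟨hxy, hw⟩
      · exact Or.inl hxy
    · rintro (⟨rfl, rfl⟩ | ⟨hxy, hw⟩)
      · exact ⟨Or.inr ⟨rfl, rfl⟩, h⟩
      · exact ⟨Or.inl ⟨hxy, by rintro ⟨rfl, rfl⟩; exact hw.not_gt h⟩, hw⟩
  rw [invCount_eq_card_inversions, key, card_map, card_insert_of_notMem,
    invCount_eq_card_inversions]
  exact fun hji => (Fin.lt_of_succ_eq hij).not_gt (mem_inversions.1 hji).1

theorem invCount_swap_mul {w : Perm (Fin n)} (hij : i.val + 1 = j.val) (h : w⁻¹ i < w⁻¹ j) :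
    invCount (swap i j * w) = invCount w + 1 := by
  rw [← invCount_inv, mul_inv_rev, swap_inv, invCount_mul_swap hij h, invCount_inv]

def excedances (τ : Perm (Fin n)) : Finset (Fin n) := univ.filter fun a => a < τ a

theorem mem_excedances {τ : Perm (Fin n)} {a : Fin n} : a ∈ excedances τ ↔ a < τ a := by
  simp [excedances]

theorem card_excedances_swap_mul {τ : Perm (Fin n)} (hij : i.val + 1 = j.val) (hi : τ i = i)
    (hj : τ j = j) : #(excedances (swap i j * τ)) = #(excedances τ) + 1 := by
  have hlt := Fin.lt_of_succ_eq hij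
  have key : excedances (swap i j * τ) = insert i (excedances τ) := by
    ext a
    simp only [mem_insert, mem_excedances, Perm.mul_apply]
    rcases eq_or_ne a i with rfl | hai
    · simpa [hi]
    rcases eq_or_ne a j with rfl | haj
    · simp [hj, hai, hlt.not_gt]
    rw [swap_apply_of_ne_of_ne (by rwa [← hi, τ.injective.ne_iff])
      (by rwa [← hj, τ.injective.ne_iff])]
    simp [hai]
  rw [key, card_insert_of_notMem (by simp [mem_excedances, hi])]

theorem excedances_swap_mul_swap {τ : Perm (Fin n)} (hij : i.val + 1 = j.val) (hi : τ i ≠ j)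
    (hj : τ j ≠ i) :
    excedances (swap i j * τ * swap i j) = (excedances τ).map (swap i j).toEmbedding := by
  ext a
  obtain ⟨x, rfl⟩ := (swap i j).surjective a
  rw [mem_map_equiv, symm_swap, swap_apply_self, mem_excedances, mem_excedances]
  simp only [Perm.mul_apply, swap_apply_self, Fin.swap_lt_swap_iff_of_succ_eq hij]
  constructor
  · rintro (⟨h, -⟩ | ⟨rfl, h⟩)
    exacts [h, absurd h hj]
  · exact fun h => Or.inl ⟨h, by rintro ⟨rfl, h'⟩; exact hi h'⟩

section Involution

variable {τ : Perm (Fin n)} (hτ : τ * τ = 1)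
include hτ

theorem invLen_eq_card_excedances_add :
    invLen τ = #(excedances τ) + #((inversions τ).filter fun p => p.1 < τ p.2) := by
  have := Perm.apply_apply_of_mul_self hτ
  rw [invLen, ← card_filter_add_card_filter_not (s := invDiagram n τ) (fun p => p.1 = p.2)]
  congr 1
  · refine card_bij' (fun p _ => p.1) (fun a _ => (a, a)) ?_ ?_ ?_ ?_
    all_goals grind [invDiagram, mem_excedances]
  · refine card_bij' (fun p _ => (p.1, τ p.2)) (fun p _ => (p.1, τ p.2)) ?_ ?_ ?_ ?_
    all_goals grind [invDiagram, mem_inversions]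

theorem invCount_eq_card_excedances_add :
    invCount τ = #(excedances τ) + 2 * #((inversions τ).filter fun p => p.1 < τ p.2) := by
  have := Perm.apply_apply_of_mul_self hτ
  rw [invCount_eq_card_inversions,
    ← card_filter_add_card_filter_not (s := inversions τ) (fun p => p.1 < τ p.2),
    ← card_filter_add_card_filter_not (s := (inversions τ).filter fun p => ¬ p.1 < τ p.2)
      (fun p => p.1 = τ p.2)]
  have hfix : #(((inversions τ).filter fun p => ¬ p.1 < τ p.2).filter fun p => p.1 = τ p.2) =
      #(excedances τ) := by
    refine card_bij' (fun p _ => p.1) (fun a _ => (a, τ a)) ?_ ?_ ?_ ?_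
    all_goals grind [mem_inversions, mem_excedances]
  have hpair : #(((inversions τ).filter fun p => ¬ p.1 < τ p.2).filter fun p => ¬ p.1 = τ p.2) =
      #((inversions τ).filter fun p => p.1 < τ p.2) := by
    refine card_bij' (fun p _ => (τ p.2, τ p.1)) (fun p _ => (τ p.2, τ p.1)) ?_ ?_ ?_ ?_
    all_goals grind [mem_inversions]
  omega

theorem two_mul_invLen : 2 * invLen τ = invCount τ + #(excedances τ) := by
  rw [invLen_eq_card_excedances_add hτ, invCount_eq_card_excedances_add hτ]
  ring

end Involution

theorem mAct_eq_ite (hij : i.val + 1 = j.val) (τ : Perm (Fin n)) :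
    mAct i τ = if τ j < τ i then τ else if τ i = i ∧ τ j = j then swap i j * τ
      else swap i j * τ * swap i j := by
  have hj : (⟨i.val + 1, hij ▸ j.isLt⟩ : Fin n) = j := Fin.ext hij
  simp only [mAct, dif_pos (hij ▸ j.isLt : i.val + 1 < n), hj]

theorem mAct_of_lt {τ : Perm (Fin n)} (hij : i.val + 1 = j.val) (h : τ j < τ i) : mAct i τ = τ := by
  rw [mAct_eq_ite hij, if_pos h]

theorem mAct_of_fixed {τ : Perm (Fin n)} (hij : i.val + 1 = j.val) (hi : τ i = i) (hj : τ j = j) :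
    mAct i τ = swap i j * τ := by
  rw [mAct_eq_ite hij, if_neg (by rw [hi, hj]; exact (Fin.lt_of_succ_eq hij).not_gt),
    if_pos ⟨hi, hj⟩]

theorem mAct_of_lt_of_not_fixed {τ : Perm (Fin n)} (hij : i.val + 1 = j.val) (h : τ i < τ j)
    (hf : ¬(τ i = i ∧ τ j = j)) : mAct i τ = swap i j * τ * swap i j := by
  rw [mAct_eq_ite hij, if_neg h.not_gt, if_neg hf]

theorem mAct_ne_iff {τ : Perm (Fin n)} (hij : i.val + 1 = j.val) : mAct i τ ≠ τ ↔ τ i < τ j := by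
  have hlt := Fin.lt_of_succ_eq hij
  rcases lt_or_gt_of_ne (τ.injective.ne hlt.ne) with h | h
  · simp only [h, iff_true]
    by_cases hf : τ i = i ∧ τ j = j
    · rw [mAct_of_fixed hij hf.1 hf.2, Ne, swap_mul_eq_iff]
      exact hlt.ne
    · rw [mAct_of_lt_of_not_fixed hij h hf]
      intro heq
      have hi : swap i j (τ j) = τ i := by simpa using congr($heq i)
      rw [swap_apply_def] at hi
      split_ifs at hi with h₁ h₂
      · exact h.not_gt (by rw [← hi, h₁]; exact hlt)
      · exact hf ⟨hi.symm, h₂⟩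
      · exact hlt.ne (τ.injective hi).symm
  · simp [mAct_of_lt hij h, h.not_gt]

theorem mAct_mul_self {τ : Perm (Fin n)} (hτ : τ * τ = 1) (i : Fin n) :
    mAct i τ * mAct i τ = 1 := by
  by_cases hi : i.val + 1 < n
  · rw [mAct_eq_ite (j := ⟨i.val + 1, hi⟩) rfl]
    split_ifs with _ hf
    · exact hτ
    · exact mul_mul_self_eq_one_of_commute (swap_mul_self _ _) hτ
        (commute_swap_of_swap_apply_eq (by rw [hf.1, hf.2]))
    · exact conj_mul_self_eq_one (swap_mul_self _ _) hτ
  · rwa [mAct, dif_neg hi]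

theorem invLen_mAct {τ : Perm (Fin n)} (hτ : τ * τ = 1) (hij : i.val + 1 = j.val)
    (hne : mAct i τ ≠ τ) : invLen (mAct i τ) = invLen τ + 1 := by
  have hlt := (mAct_ne_iff hij).1 hne
  have hττ := Perm.apply_apply_of_mul_self hτ
  have hτ_inv : τ⁻¹ = τ := inv_eq_of_mul_eq_one_right hτ
  suffices 2 * invLen (mAct i τ) = 2 * invLen τ + 2 by omega
  rw [two_mul_invLen (mAct_mul_self hτ i), two_mul_invLen hτ]
  by_cases hf : τ i = i ∧ τ j = j
  · rw [mAct_of_fixed hij hf.1 hf.2, invCount_swap_mul hij (by rwa [hτ_inv]),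
      card_excedances_swap_mul hij hf.1 hf.2]
    ring
  · have hτi : τ i ≠ j := fun h => by
      have : τ j = i := by rw [← h, hττ]
      exact hlt.not_gt (by rw [this, h]; exact Fin.lt_of_succ_eq hij)
    have hτj : τ j ≠ i := fun h => by
      have : τ i = j := by rw [← h, hττ]
      exact hlt.not_gt (by rw [this, h]; exact Fin.lt_of_succ_eq hij)
    have hsτ : (swap i j * τ) i < (swap i j * τ) j := by
      rw [Perm.mul_apply, Perm.mul_apply, Fin.swap_lt_swap_iff_of_succ_eq hij]
      exact Or.inl ⟨hlt, hf⟩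
    rw [mAct_of_lt_of_not_fixed hij hlt hf, invCount_mul_swap hij hsτ,
      invCount_swap_mul hij (by rwa [hτ_inv]), excedances_swap_mul_swap hij hτi hτj, card_map]
    ring

theorem exists_mAct_eq_of_lt {τ : Perm (Fin n)} (hτ : τ * τ = 1) (hij : i.val + 1 = j.val)
    (h : τ j < τ i) : ∃ σ : Perm (Fin n), σ * σ = 1 ∧ σ i < σ j ∧ mAct i σ = τ := by
  have hττ := Perm.apply_apply_of_mul_self hτ
  by_cases hτi : τ i = j
  · have hτj : τ j = i := by rw [← hτi, hττ]
    refine ⟨swap i j * τ, mul_mul_self_eq_one_of_commute (swap_mul_self i j) hτ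
      (commute_swap_of_swap_apply_eq (by rw [hτi, hτj, swap_comm])), ?_, ?_⟩
    · simpa [hτi, hτj] using Fin.lt_of_succ_eq hij
    · rw [mAct_of_fixed hij (by simp [hτi]) (by simp [hτj]), swap_mul_self_mul]
  · have hτj : τ j ≠ i := fun h' => hτi (by rw [← h', hττ])
    have hσ : (swap i j * τ * swap i j) i < (swap i j * τ * swap i j) j := by
      simp only [Perm.mul_apply, swap_apply_left, swap_apply_right,
        Fin.swap_lt_swap_iff_of_succ_eq hij]
      exact Or.inl ⟨h, fun h' => hτj h'.1⟩
    have hσf : ¬((swap i j * τ * swap i j) i = i ∧ (swap i j * τ * swap i j) j = j) := by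
      simp only [Perm.mul_apply, swap_apply_left, swap_apply_right, swap_apply_eq_iff]
      rintro ⟨hj, hi⟩
      rw [hi, hj] at h
      exact h.not_gt (Fin.lt_of_succ_eq hij)
    refine ⟨_, conj_mul_self_eq_one (swap_mul_self i j) hτ, hσ, ?_⟩
    rw [mAct_of_lt_of_not_fixed hij hσ hσf]
    simp only [mul_assoc, swap_mul_self, swap_mul_self_mul, mul_one]

def MStep (σ τ : Perm (Fin n)) : Prop := ∃ i : Fin n, i.val + 1 < n ∧ mAct i σ = τ

theorem MStep.exists_applyM_of_reflTransGen {σ τ : Perm (Fin n)} (h : ReflTransGen MStep σ τ) :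
    ∃ L : List (Fin n), (∀ i ∈ L, i.val + 1 < n) ∧ applyM L σ = τ := by
  induction h with
  | refl => exact ⟨[], by simp, rfl⟩
  | tail _ hstep ih =>
    obtain ⟨L, hL, rfl⟩ := ih
    obtain ⟨i, hi, rfl⟩ := hstep
    exact ⟨i :: L, by simpa [hi] using hL, rfl⟩

theorem invLen_le (τ : Perm (Fin n)) : invLen τ ≤ n * n :=
  (card_le_univ (invDiagram n τ)).trans_eq (by simp)

theorem MStep.reflTransGen_w0 {τ : Perm (Fin n)} (hτ : τ * τ = 1) :
    ReflTransGen MStep τ (w0 n) := by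
  by_cases hw : τ = w0 n
  · rw [hw]
  obtain ⟨i, j, hij, hlt⟩ := Perm.exists_lt_of_ne_w0 hw
  have hne := (mAct_ne_iff hij).2 hlt
  exact .head ⟨i, by omega, rfl⟩ (reflTransGen_w0 (mAct_mul_self hτ i))
termination_by n * n - invLen τ
decreasing_by
  have := invLen_le (mAct i τ)
  have := invLen_mAct hτ hij hne
  omega

theorem MStep.reflTransGen_one {τ : Perm (Fin n)} (hτ : τ * τ = 1) :
    ReflTransGen MStep 1 τ := by
  by_cases h1 : τ = 1
  · rw [h1]
  obtain ⟨i, j, hij, hlt⟩ := Perm.exists_lt_of_ne_one h1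
  obtain ⟨σ, hσ, hσlt, rfl⟩ := exists_mAct_eq_of_lt hτ hij hlt
  have := invLen_mAct hσ hij ((mAct_ne_iff hij).2 hσlt)
  exact .tail (reflTransGen_one hσ) ⟨i, by omega, rfl⟩
termination_by invLen τ

end

/-- Properties of the weak order on involutions `I_n`: every involution is reachable
from the identity (the identity is the unique minimal element), the longest
permutation `w_0` is reachable from every involution (it is the unique maximal
element), from any `τ ≠ w_0` some `m(s_i)` moves `τ`, and whenever `m(s_i)·τ ≠ τ`
the involution length increases by exactly one. -/
theorem weak_order_involutions (n : ℕ) (τ : Equiv.Perm (Fin n)) (hτ : τ * τ = 1) :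
    (∃ L : List (Fin n), (∀ i ∈ L, i.val + 1 < n) ∧ applyM L 1 = τ) ∧
      (∃ L : List (Fin n), (∀ i ∈ L, i.val + 1 < n) ∧ applyM L τ = w0 n) ∧
      (τ ≠ w0 n → ∃ i : Fin n, i.val + 1 < n ∧ mAct i τ ≠ τ) ∧
      (∀ i : Fin n, i.val + 1 < n → mAct i τ ≠ τ → invLen (mAct i τ) = invLen τ + 1) := by
  refine ⟨MStep.exists_applyM_of_reflTransGen (MStep.reflTransGen_one hτ),
    MStep.exists_applyM_of_reflTransGen (MStep.reflTransGen_w0 hτ), fun hne => ?_,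
    fun i hi => invLen_mAct hτ (j := ⟨i.val + 1, hi⟩) rfl⟩
  obtain ⟨i, j, hij, hlt⟩ := Perm.exists_lt_of_ne_w0 hne
  exact ⟨i, by omega, (mAct_ne_iff hij).2 hlt⟩
end
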